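/- arXiv:1411.0803 — 3 statements merged into one kernel-verified Lean document; each statement's English description precedes it below -/
import Mathlib

section
/- Let K ⊆ X be closed, x ∈ K, r > 0 and k ≥ 1 an integer. Assume ν(B(2r)) < ∞, and let M > 0 be a constant such that ν(E_1(g, 2r, ∂_r K, x')) ≤ M for every x' ∈ ∂_r K. Then the set E_k(g, r, K, x) can be covered by at most (M / ν(g⁻¹B(r/2)g))^k Bowen (gᵏ, r)-balls; that is, there exists a finite set S ⊆ H with (card S) · ν(g⁻¹B(r/2)g)^k ≤ M^k and E_k(g, r, K, x) ⊆ ⋃_{h₀ ∈ S} (g⁻ᵏ B(r) gᵏ)·h₀. -/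
open MeasureTheory Metric Set
open scoped ENNReal


section Aux
variable {G : Type*} [Group G] [MetricSpace G]

lemma dist_mul_one_le (hd : ∀ a c g : G, dist (a * g) (c * g) = dist a c)
    (a b : G) : dist (a * b) 1 ≤ dist a 1 + dist b 1 := by
  calc dist (a * b) 1 ≤ dist (a * b) b + dist b 1 := dist_triangle _ _ _
    _ = dist a 1 + dist b 1 := by
        have := hd a 1 b; simp only [one_mul] at this; rw [this]

lemma dist_inv_one (hd : ∀ a c g : G, dist (a * g) (c * g) = dist a c)
    (a : G) : dist a⁻¹ 1 = dist a 1 := by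
  have := hd a⁻¹ 1 a
  simpa [dist_comm] using this.symm

end Aux

section Norm
variable {G : Type*} [Group G] (H : Subgroup G) (g : G)

lemma conj_mem_of_norm (hnorm : (fun h => g⁻¹ * h * g) '' (H : Set G) = (H : Set G))
    {h : G} (hh : h ∈ H) : g⁻¹ * h * g ∈ H := by
  have : g⁻¹ * h * g ∈ ((fun h => g⁻¹ * h * g) '' (H : Set G)) := ⟨h, hh, rfl⟩
  rwa [hnorm] at this

lemma conj_mem_of_norm' (hnorm : (fun h => g⁻¹ * h * g) '' (H : Set G) = (H : Set G))
    {h : G} (hh : h ∈ H) : g * h * g⁻¹ ∈ H := by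
  have : h ∈ ((fun h => g⁻¹ * h * g) '' (H : Set G)) := by rw [hnorm]; exact hh
  obtain ⟨h', hh', he⟩ := this
  have : g * h * g⁻¹ = h' := by rw [← he]; group
  rw [this]; exact hh'

lemma conj_pow_mem_of_norm (hnorm : (fun h => g⁻¹ * h * g) '' (H : Set G) = (H : Set G))
    (n : ℕ) {h : G} (hh : h ∈ H) : (g ^ n)⁻¹ * h * g ^ n ∈ H := by
  induction n generalizing h with
  | zero => simpa using hh
  | succ m ih =>
      have h1 : g⁻¹ * h * g ∈ H := conj_mem_of_norm H g hnorm hh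
      have := ih h1
      have he : (g ^ (m+1))⁻¹ * h * g ^ (m+1) = (g ^ m)⁻¹ * (g⁻¹ * h * g) * g ^ m := by
        rw [pow_succ]; group
      rwa [he]
end Norm

section Step
variable {G : Type*} [Group G] [MetricSpace G] [IsTopologicalGroup G]
  [MeasurableSpace G] [BorelSpace G]

lemma cover_step
    (hd : ∀ a c g : G, dist (a * g) (c * g) = dist a c)
    (H : Subgroup G) (hHclosed : IsClosed (H : Set G))
    (ν : Measure G)
    (hνpos : ∀ U : Set G, IsOpen U → (U ∩ H).Nonempty → 0 < ν (U ∩ H))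
    (hνinv : ∀ (S : Set G) (h : G), h ∈ H → ν ((fun a => a * h) '' S) = ν S)
    (g : G)
    (hnorm : (fun h => g⁻¹ * h * g) '' (H : Set G) = (H : Set G))
    (hcontr : ∀ s > (0 : ℝ),
      (fun h => g⁻¹ * h * g) '' (ball (1 : G) s ∩ H) ⊆ ball (1 : G) s ∩ H)
    {X : Type*} [MetricSpace X] [MulAction G X]
    (hLip : ∀ (a c : G) (x : X), dist (a • x) (c • x) ≤ dist a c)
    (K : Set X)
    (r : ℝ) (hr : 0 < r)
    (hfin : ν (ball (1 : G) (2*r) ∩ H) < ⊤)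
    (M : ℝ) (hM : 0 < M)
    (x' : X)
    (hb : ν {h | h ∈ ball (1 : G) (2*r) ∩ H ∧
             ∀ ℓ : ℕ, 1 ≤ ℓ → ℓ ≤ 1 → infDist ((g ^ ℓ) • (h • x')) K ≤ r}
        ≤ ENNReal.ofReal M) :
    ∃ T : Finset G,
      (↑T : Set G) ⊆ {b | b ∈ ball (1:G) r ∩ H ∧ g • (b • x') ∈ K} ∧
      (T.card : ℝ≥0∞) * ν ((fun h => g⁻¹ * h * g) '' (ball (1:G) (r/2) ∩ H))
        ≤ ENNReal.ofReal M ∧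
      {b | b ∈ ball (1:G) r ∩ H ∧ g • (b • x') ∈ K} ⊆
        ⋃ t ∈ T, (fun c => g⁻¹ * c * g * t) '' (ball (1:G) r ∩ H) := by
  classical
  set Q : Set G := {b | b ∈ ball (1:G) r ∩ H ∧ g • (b • x') ∈ K} with hQdef
  set F : Set G := {h | h ∈ ball (1 : G) (2*r) ∩ H ∧
      ∀ ℓ : ℕ, 1 ≤ ℓ → ℓ ≤ 1 → infDist ((g ^ ℓ) • (h • x')) K ≤ r} with hFdef
  set D : Set G := (fun h => g⁻¹ * h * g) '' (ball (1:G) (r/2) ∩ H) with hDdef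
  have hr2 : (0:ℝ) < r / 2 := by linarith
  have hDsub : D ⊆ ball (1:G) (r/2) ∩ H := hcontr (r/2) hr2
  -- D as open ∩ H
  have hinj : Function.Injective (fun h : G => g⁻¹ * h * g) := by
    intro a b hab
    simpa using mul_left_cancel (mul_right_cancel hab)
  have hDeq : D = ((fun h : G => g⁻¹ * h * g) '' ball (1:G) (r/2)) ∩ H := by
    rw [hDdef, Set.image_inter hinj, hnorm]
  have hUopen : IsOpen ((fun h : G => g⁻¹ * h * g) '' ball (1:G) (r/2)) := by
    have : (fun h : G => g⁻¹ * h * g) =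
        ((Homeomorph.mulLeft g⁻¹).trans (Homeomorph.mulRight g)) := rfl
    rw [this]
    exact (Homeomorph.isOpen_image _).mpr isOpen_ball
  have hDmeas : MeasurableSet D := by
    rw [hDeq]; exact hUopen.measurableSet.inter hHclosed.measurableSet
  have hDpos : 0 < ν D := by
    rw [hDeq]
    refine hνpos _ hUopen ⟨1, ⟨⟨1, mem_ball_self hr2, by simp⟩, H.one_mem⟩⟩
  -- translates
  have htrans_meas : ∀ t : G, MeasurableSet ((fun a => a * t) '' D) := by
    intro t
    rw [Set.image_mul_right]
    exact hDmeas.preimage (measurable_mul_const t⁻¹)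
  have htransν : ∀ t ∈ H, ν ((fun a => a * t) '' D) = ν D := fun t ht => hνinv D t ht
  -- translates at points of Q sit inside F
  have hsubF : ∀ t ∈ Q, (fun a => a * t) '' D ⊆ F := by
    rintro t ⟨⟨htball, htH⟩, htK⟩ y ⟨d, ⟨a, ⟨haball, haH⟩, rfl⟩, rfl⟩
    have hd1 : g⁻¹ * a * g ∈ ball (1:G) (r/2) ∩ H :=
      hcontr (r/2) hr2 ⟨a, ⟨haball, haH⟩, rfl⟩
    constructor
    · constructor
      · have h1 : dist (g⁻¹ * a * g * t) 1 ≤ dist (g⁻¹ * a * g) 1 + dist t 1 :=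
          dist_mul_one_le hd _ _
        have h2 : dist (g⁻¹ * a * g) 1 < r / 2 := by
          simpa [mem_ball] using hd1.1
        have h3 : dist t 1 < r := by simpa [mem_ball] using htball
        have : dist (g⁻¹ * a * g * t) 1 < 2 * r := by linarith
        simpa [mem_ball] using this
      · exact H.mul_mem hd1.2 htH
    · intro ℓ h1ℓ hℓ1
      have hℓ : ℓ = 1 := le_antisymm hℓ1 h1ℓ
      subst hℓ
      have hy : g • (t • x') ∈ K := htK
      have hcomp : (g ^ 1) • ((g⁻¹ * a * g * t) • x') = a • (g • (t • x')) := by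
        rw [pow_one, smul_smul, smul_smul, smul_smul]
        congr 1
        group
      rw [hcomp]
      calc infDist (a • (g • (t • x'))) K ≤ dist (a • (g • (t • x'))) (g • (t • x')) :=
            infDist_le_dist_of_mem hy
        _ ≤ dist a 1 := by
            have := hLip a 1 (g • (t • x')); simpa using this
        _ ≤ r := by
            have : dist a 1 < r / 2 := by simpa [mem_ball] using haball
            linarith
  -- disjointness of separated translates
  have hdisj : ∀ t t' : G, r ≤ dist (g * t * g⁻¹) (g * t' * g⁻¹) →
      Disjoint ((fun a => a * t) '' D) ((fun a => a * t') '' D) := by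
    intro t t' hsep
    rw [Set.disjoint_left]
    rintro y ⟨d, ⟨a, ⟨haball, -⟩, rfl⟩, hy⟩ ⟨d', ⟨a', ⟨ha'ball, -⟩, rfl⟩, hy'⟩
    simp only at hy hy'
    have heq : g⁻¹ * a * g * t = g⁻¹ * a' * g * t' := hy.trans hy'.symm
    have heq2 : a * (g * t * g⁻¹) = a' * (g * t' * g⁻¹) := by
      have := congrArg (fun z => g * z * g⁻¹) heq
      simpa [mul_assoc] using this
    have h4 : g * t * g⁻¹ = (a⁻¹ * a') * (g * t' * g⁻¹) := by
      have h5 : a⁻¹ * (a * (g * t * g⁻¹)) = a⁻¹ * (a' * (g * t' * g⁻¹)) := by rw [heq2]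
      simpa [mul_assoc] using h5
    have hlt : dist (g * t * g⁻¹) (g * t' * g⁻¹) < r := by
      have h1 : dist (a⁻¹ * a') 1 ≤ dist a⁻¹ 1 + dist a' 1 := dist_mul_one_le hd _ _
      rw [dist_inv_one hd] at h1
      have h2 : dist a 1 < r / 2 := by simpa [mem_ball] using haball
      have h3 : dist a' 1 < r / 2 := by simpa [mem_ball] using ha'ball
      calc dist (g * t * g⁻¹) (g * t' * g⁻¹)
          = dist ((a⁻¹ * a') * (g * t' * g⁻¹)) (1 * (g * t' * g⁻¹)) := by
            rw [← h4, one_mul]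
        _ = dist (a⁻¹ * a') 1 := hd _ _ _
        _ < r := by linarith
    exact absurd hsep (not_le.mpr hlt)
  -- counting separated finsets
  have hsub2r : D ⊆ ball (1:G) (2*r) ∩ H := by
    refine hDsub.trans (Set.inter_subset_inter_left _ (ball_subset_ball ?_))
    linarith
  have hcount : ∀ T : Finset G, (↑T : Set G) ⊆ Q →
      (∀ t ∈ T, ∀ t' ∈ T, t ≠ t' → r ≤ dist (g * t * g⁻¹) (g * t' * g⁻¹)) →
      (T.card : ℝ≥0∞) * ν D ≤ ENNReal.ofReal M := by
    intro T hTQ hTsep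
    have hdisj' : (↑T : Set G).PairwiseDisjoint (fun t => (fun a => a * t) '' D) := by
      intro t ht t' ht' htne
      exact hdisj t t' (hTsep t ht t' ht' htne)
    have h1 : ν (⋃ t ∈ T, (fun a => a * t) '' D) = ∑ t ∈ T, ν ((fun a => a * t) '' D) :=
      measure_biUnion_finset hdisj' (fun t _ => htrans_meas t)
    have h2 : ∀ t ∈ T, ν ((fun a => a * t) '' D) = ν D := fun t ht =>
      htransν t (hTQ (Finset.mem_coe.mpr ht)).1.2
    have h3 : (⋃ t ∈ T, (fun a => a * t) '' D) ⊆ F := by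
      intro y hy
      rw [Set.mem_iUnion₂] at hy
      obtain ⟨t, ht, hyt⟩ := hy
      exact hsubF t (hTQ (Finset.mem_coe.mpr ht)) hyt
    calc (T.card : ℝ≥0∞) * ν D = ∑ _t ∈ T, ν D := by
          rw [Finset.sum_const, nsmul_eq_mul]
      _ = ∑ t ∈ T, ν ((fun a => a * t) '' D) := (Finset.sum_congr rfl h2).symm
      _ = ν (⋃ t ∈ T, (fun a => a * t) '' D) := h1.symm
      _ ≤ ν F := measure_mono h3
      _ ≤ ENNReal.ofReal M := hb
  have hDfin : ν D ≠ ⊤ := (lt_of_le_of_lt (measure_mono hsub2r) hfin).ne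
  obtain ⟨n₀, hn₀⟩ :=
    ENNReal.exists_nat_gt (ENNReal.div_lt_top ENNReal.ofReal_ne_top hDpos.ne').ne
  have hbddA : ∀ T : Finset G, (↑T : Set G) ⊆ Q →
      (∀ t ∈ T, ∀ t' ∈ T, t ≠ t' → r ≤ dist (g * t * g⁻¹) (g * t' * g⁻¹)) →
      T.card ≤ n₀ := by
    intro T hTQ hTsep
    have hle : (T.card : ℝ≥0∞) ≤ ENNReal.ofReal M / ν D :=
      (ENNReal.le_div_iff_mul_le (Or.inl hDpos.ne') (Or.inl hDfin)).mpr
        (hcount T hTQ hTsep)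
    have hlt : (T.card : ℝ≥0∞) < (n₀ : ℝ≥0∞) := lt_of_le_of_lt hle hn₀
    exact_mod_cast hlt.le
  set A : Set ℕ := {n | ∃ T : Finset G, ((↑T : Set G) ⊆ Q ∧
    ∀ t ∈ T, ∀ t' ∈ T, t ≠ t' → r ≤ dist (g * t * g⁻¹) (g * t' * g⁻¹)) ∧ T.card = n}
    with hAdef
  have hA0 : (0:ℕ) ∈ A := ⟨∅, ⟨by simp, by simp⟩, by simp⟩
  have hAbdd : BddAbove A := by
    refine ⟨n₀, ?_⟩
    rintro n ⟨T, ⟨h1, h2⟩, rfl⟩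
    exact hbddA T h1 h2
  obtain ⟨T, ⟨hTQ, hTsep⟩, hTcard⟩ := Nat.sSup_mem ⟨0, hA0⟩ hAbdd
  refine ⟨T, hTQ, hcount T hTQ hTsep, ?_⟩
  intro b hbQ
  by_contra hnot
  have hbH : b ∈ H := hbQ.1.2
  have hbT : b ∉ T := by
    intro hbT
    refine hnot (Set.mem_biUnion hbT ⟨1, ⟨mem_ball_self hr, H.one_mem⟩, by simp⟩)
  have hsepb : ∀ t ∈ T, r ≤ dist (g * b * g⁻¹) (g * t * g⁻¹) := by
    intro t ht
    by_contra hlt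
    push_neg at hlt
    have htH : t ∈ H := (hTQ (Finset.mem_coe.mpr ht)).1.2
    set c := g * (b * t⁻¹) * g⁻¹ with hc
    have hcH : c ∈ H := conj_mem_of_norm' H g hnorm (H.mul_mem hbH (H.inv_mem htH))
    have hcb : dist c 1 < r := by
      have he : c * (g * t * g⁻¹) = g * b * g⁻¹ := by rw [hc]; group
      calc dist c 1 = dist (c * (g * t * g⁻¹)) (1 * (g * t * g⁻¹)) := (hd _ _ _).symm
        _ = dist (g * b * g⁻¹) (g * t * g⁻¹) := by rw [he, one_mul]
        _ < r := hlt
    have : b ∈ (fun c => g⁻¹ * c * g * t) '' (ball 1 r ∩ H) := by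
      refine ⟨c, ⟨by simpa [mem_ball] using hcb, hcH⟩, ?_⟩
      show g⁻¹ * c * g * t = b
      rw [hc]; group
    exact hnot (Set.mem_biUnion ht this)
  have hmem : T.card + 1 ∈ A := by
    refine ⟨insert b T, ⟨?_, ?_⟩, by rw [Finset.card_insert_of_notMem hbT]⟩
    · intro y hy
      rcases Finset.mem_insert.mp (Finset.mem_coe.mp hy) with h | h
      · exact h ▸ hbQ
      · exact hTQ (Finset.mem_coe.mpr h)
    · intro t ht t' ht' htne
      rcases Finset.mem_insert.mp ht with h | h <;>
        rcases Finset.mem_insert.mp ht' with h' | h'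
      · exact absurd (h.trans h'.symm) htne
      · exact h ▸ hsepb t' h'
      · rw [dist_comm]; exact h' ▸ hsepb t h
      · exact hTsep t h t' h' htne
  have hle := le_csSup hAbdd hmem
  rw [← hTcard] at hle
  omega
end Step


/-- Under the standing context (G a topological group with a right-invariant
metric inducing its topology, H a closed subgroup, ν a right Haar measure on H,
g normalizing H and contracting H-balls, X a metric G-space with 1-Lipschitz orbit maps),
if K ⊆ X is closed, x ∈ K, r > 0, k ≥ 1, ν(B(2r)) < ∞, and
ν(E₁(g, 2r, ∂_r K, x')) ≤ M for all x' ∈ ∂_r K, then E_k(g, r, K, x) can be covered by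
at most (M / ν(g⁻¹B(r/2)g))^k Bowen (g^k, r)-balls. -/
theorem exceptional_set_cover_pow
    {G : Type*} [Group G] [MetricSpace G] [IsTopologicalGroup G]
    [MeasurableSpace G] [BorelSpace G]
    (hd : ∀ a c g : G, dist (a * g) (c * g) = dist a c)
    (H : Subgroup G) (hHclosed : IsClosed (H : Set G))
    (ν : Measure G)
    (hνpos : ∀ U : Set G, IsOpen U → (U ∩ H).Nonempty → 0 < ν (U ∩ H))
    (hνinv : ∀ (S : Set G) (h : G), h ∈ H → ν ((fun a => a * h) '' S) = ν S)
    (g : G)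
    (hnorm : (fun h => g⁻¹ * h * g) '' (H : Set G) = (H : Set G))
    (hcontr : ∀ s > (0 : ℝ),
      (fun h => g⁻¹ * h * g) '' (ball (1 : G) s ∩ H) ⊆ ball (1 : G) s ∩ H)
    {X : Type*} [MetricSpace X] [MulAction G X]
    (hLip : ∀ (a c : G) (x : X), dist (a • x) (c • x) ≤ dist a c)
    (K : Set X) (hKclosed : IsClosed K) (x : X) (hxK : x ∈ K)
    (r : ℝ) (hr : 0 < r) (k : ℕ) (hk : 1 ≤ k)
    (hfin : ν (ball (1 : G) (2 * r) ∩ H) < ⊤)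
    (M : ℝ) (hM : 0 < M)
    (hbound : ∀ x' : X, infDist x' K ≤ r →
      ν {h | h ∈ ball (1 : G) (2 * r) ∩ H ∧
             ∀ ℓ : ℕ, 1 ≤ ℓ → ℓ ≤ 1 → infDist ((g ^ ℓ) • (h • x')) K ≤ r}
        ≤ ENNReal.ofReal M) :
    ∃ S : Finset G, (S : Set G) ⊆ (H : Set G) ∧
      (S.card : ℝ≥0∞) *
          (ν ((fun h => g⁻¹ * h * g) '' (ball (1 : G) (r / 2) ∩ H))) ^ k
        ≤ ENNReal.ofReal M ^ k ∧
      {h | h ∈ ball (1 : G) r ∩ H ∧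
           ∀ ℓ : ℕ, 1 ≤ ℓ → ℓ ≤ k → (g ^ ℓ) • (h • x) ∈ K}
        ⊆ ⋃ h₀ ∈ S, (fun b => (g ^ k)⁻¹ * b * (g ^ k) * h₀) '' (ball (1 : G) r ∩ H) := by
  classical
  set c : ℝ≥0∞ := ν ((fun h => g⁻¹ * h * g) '' (ball (1 : G) (r / 2) ∩ H)) with hc
  set m : ℝ≥0∞ := ENNReal.ofReal M with hm
  have main : ∀ j : ℕ, ∃ S : Finset G, (↑S : Set G) ⊆ (H : Set G) ∧
      (∀ h₀ ∈ S, infDist ((g ^ j) • (h₀ • x)) K ≤ r) ∧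
      (S.card : ℝ≥0∞) * c ^ j ≤ m ^ j ∧
      {h | h ∈ ball (1 : G) r ∩ H ∧ ∀ ℓ : ℕ, 1 ≤ ℓ → ℓ ≤ j → (g ^ ℓ) • (h • x) ∈ K}
        ⊆ ⋃ h₀ ∈ S, (fun b => (g ^ j)⁻¹ * b * (g ^ j) * h₀) '' (ball (1 : G) r ∩ H) := by
    intro j
    induction j with
    | zero =>
        refine ⟨{1}, by simp [H.one_mem], ?_, by simp, ?_⟩
        · intro h₀ hh₀
          rw [Finset.mem_singleton] at hh₀
          subst hh₀
          simp only [pow_zero, one_smul]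
          rw [infDist_zero_of_mem hxK]
          exact hr.le
        · intro h hh
          refine Set.mem_biUnion (Finset.mem_singleton_self 1) ⟨h, hh.1, ?_⟩
          simp
    | succ j ih =>
        obtain ⟨S, hSH, hSK, hScard, hScover⟩ := ih
        have hstep : ∀ h₀ ∈ S, ∃ T : Finset G,
            (↑T : Set G) ⊆ {b | b ∈ ball (1:G) r ∩ H ∧
              g • (b • ((g ^ j) • (h₀ • x))) ∈ K} ∧
            (T.card : ℝ≥0∞) * c ≤ m ∧
            {b | b ∈ ball (1:G) r ∩ H ∧ g • (b • ((g ^ j) • (h₀ • x))) ∈ K} ⊆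
              ⋃ t ∈ T, (fun c' => g⁻¹ * c' * g * t) '' (ball (1:G) r ∩ H) := by
          intro h₀ hh₀
          have h2r : ν (ball (1 : G) (2*r) ∩ H) < ⊤ := by
            convert hfin using 3
          exact cover_step hd H hHclosed ν hνpos hνinv g hnorm hcontr hLip K r hr h2r
            M hM ((g ^ j) • (h₀ • x)) (hbound _ (hSK h₀ hh₀))
        choose T hT1 hT2 hT3 using hstep
        refine ⟨S.attach.biUnion (fun p => (T p.1 p.2).image
            (fun t => (g ^ j)⁻¹ * t * g ^ j * p.1)), ?_, ?_, ?_, ?_⟩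
        · -- subset of H
          intro y hy
          rw [Finset.mem_coe, Finset.mem_biUnion] at hy
          obtain ⟨p, -, hy⟩ := hy
          rw [Finset.mem_image] at hy
          obtain ⟨t, htT, rfl⟩ := hy
          have htH : t ∈ H := (hT1 p.1 p.2 (Finset.mem_coe.mpr htT)).1.2
          exact H.mul_mem (conj_pow_mem_of_norm H g hnorm j htH) (hSH p.2)
        · -- invariant
          intro h₀' hh₀'
          rw [Finset.mem_biUnion] at hh₀'
          obtain ⟨p, -, hh₀'⟩ := hh₀'
          rw [Finset.mem_image] at hh₀'
          obtain ⟨t, htT, rfl⟩ := hh₀'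
          have htK : g • (t • ((g ^ j) • (p.1 • x))) ∈ K :=
            (hT1 p.1 p.2 (Finset.mem_coe.mpr htT)).2
          have heq : (g ^ (j+1)) • (((g ^ j)⁻¹ * t * g ^ j * p.1) • x) =
              g • (t • ((g ^ j) • (p.1 • x))) := by
            rw [smul_smul, smul_smul, smul_smul, smul_smul]
            congr 1
            rw [pow_succ']
            group
          rw [heq, infDist_zero_of_mem htK]
          exact hr.le
        · -- cardinality
          have hcard1 : ((S.attach.biUnion (fun p => (T p.1 p.2).image
              (fun t => (g ^ j)⁻¹ * t * g ^ j * p.1))).card : ℝ≥0∞) ≤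
              ∑ p ∈ S.attach, ((T p.1 p.2).card : ℝ≥0∞) := by
            have h1 := Finset.card_biUnion_le (s := S.attach)
              (t := fun p => (T p.1 p.2).image (fun t => (g ^ j)⁻¹ * t * g ^ j * p.1))
            have h2 : ∑ p ∈ S.attach, ((T p.1 p.2).image
                (fun t => (g ^ j)⁻¹ * t * g ^ j * p.1)).card ≤
                ∑ p ∈ S.attach, (T p.1 p.2).card :=
              Finset.sum_le_sum fun p _ => Finset.card_image_le
            exact_mod_cast h1.trans h2
          calc ((S.attach.biUnion (fun p => (T p.1 p.2).image
                (fun t => (g ^ j)⁻¹ * t * g ^ j * p.1))).card : ℝ≥0∞) * c ^ (j+1)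
              ≤ (∑ p ∈ S.attach, ((T p.1 p.2).card : ℝ≥0∞)) * c ^ (j+1) :=
                mul_le_mul_left hcard1 _
            _ = ∑ p ∈ S.attach, ((T p.1 p.2).card : ℝ≥0∞) * c * c ^ j := by
                rw [Finset.sum_mul]
                refine Finset.sum_congr rfl fun p _ => ?_
                rw [pow_succ]; ring
            _ ≤ ∑ _p ∈ S.attach, m * c ^ j :=
                Finset.sum_le_sum fun p _ => mul_le_mul_left (hT2 p.1 p.2) _
            _ = (S.card : ℝ≥0∞) * c ^ j * m := by
                rw [Finset.sum_const, Finset.card_attach, nsmul_eq_mul]; ring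
            _ ≤ m ^ j * m := mul_le_mul_left hScard m
            _ = m ^ (j+1) := (pow_succ m j).symm
        · -- covering
          intro h hh
          have hhj : h ∈ {h | h ∈ ball (1 : G) r ∩ H ∧
              ∀ ℓ : ℕ, 1 ≤ ℓ → ℓ ≤ j → (g ^ ℓ) • (h • x) ∈ K} :=
            ⟨hh.1, fun ℓ h1 h2 => hh.2 ℓ h1 (h2.trans (Nat.le_succ j))⟩
          have := hScover hhj
          rw [Set.mem_iUnion₂] at this
          obtain ⟨h₀, hh₀S, a, ⟨haball, haH⟩, hae⟩ := this
          simp only at hae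
          have haQ : a ∈ {b | b ∈ ball (1:G) r ∩ H ∧
              g • (b • ((g ^ j) • (h₀ • x))) ∈ K} := by
            refine ⟨⟨haball, haH⟩, ?_⟩
            have h2 : (g ^ (j+1)) • (h • x) ∈ K := hh.2 (j+1) (by omega) le_rfl
            have heq : g • (a • ((g ^ j) • (h₀ • x))) = (g ^ (j+1)) • (h • x) := by
              rw [smul_smul, smul_smul, smul_smul, smul_smul, ← hae]
              congr 1
              rw [pow_succ']
              group
            rw [heq]
            exact h2
          have := hT3 h₀ hh₀S haQ
          rw [Set.mem_iUnion₂] at this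
          obtain ⟨t, htT, c', ⟨hc'ball, hc'H⟩, hce⟩ := this
          simp only at hce
          rw [Set.mem_iUnion₂]
          refine ⟨(g ^ j)⁻¹ * t * g ^ j * h₀, ?_, c', ⟨hc'ball, hc'H⟩, ?_⟩
          · rw [Finset.mem_biUnion]
            exact ⟨⟨h₀, hh₀S⟩, Finset.mem_attach _ _,
              Finset.mem_image_of_mem _ htT⟩
          · show (g ^ (j+1))⁻¹ * c' * g ^ (j+1) * ((g ^ j)⁻¹ * t * g ^ j * h₀) = h
            rw [← hae, ← hce, pow_succ']
            group
  obtain ⟨S, hSH, -, hScard, hScover⟩ := main k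
  exact ⟨S, hSH, hScard, hScover⟩
end

section
/- Let K ⊆ X be closed, x ∈ X and r > 0, and assume ν(B(2r)) < ∞. Then the set E_1(g, r, K, x) can be covered by at most ν(E_1(g, 2r, ∂_r K, x)) / ν(g⁻¹B(r/2)g) Bowen (g, r)-balls; that is, there exists a finite set S ⊆ E_1(g, r, K, x) with (card S) · ν(g⁻¹B(r/2)g) ≤ ν(E_1(g, 2r, ∂_r K, x)) and E_1(g, r, K, x) ⊆ ⋃_{h₀ ∈ S} (g⁻¹ B(r) g)·h₀. -/
open MeasureTheory Metric Set
open scoped ENNReal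

/-- In the standing context, for K ⊆ X closed, x ∈ X, r > 0 with
ν(B(2r)) < ∞, the set E₁(g, r, K, x) can be covered by at most
ν(E₁(g, 2r, ∂_r K, x)) / ν(g⁻¹B(r/2)g) Bowen (g, r)-balls. -/
theorem exceptional_set_cover_one
    {G : Type*} [Group G] [MetricSpace G] [IsTopologicalGroup G]
    [MeasurableSpace G] [BorelSpace G]
    (hd : ∀ a c g : G, dist (a * g) (c * g) = dist a c)
    (H : Subgroup G) (hHclosed : IsClosed (H : Set G))
    (ν : Measure G)
    (hνpos : ∀ U : Set G, IsOpen U → (U ∩ H).Nonempty → 0 < ν (U ∩ H))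
    (hνinv : ∀ (S : Set G) (h : G), h ∈ H → ν ((fun a => a * h) '' S) = ν S)
    (g : G)
    (hnorm : (fun h => g⁻¹ * h * g) '' (H : Set G) = (H : Set G))
    (hcontr : ∀ s > (0 : ℝ),
      (fun h => g⁻¹ * h * g) '' (ball (1 : G) s ∩ H) ⊆ ball (1 : G) s ∩ H)
    {X : Type*} [MetricSpace X] [MulAction G X]
    (hLip : ∀ (a c : G) (x : X), dist (a • x) (c • x) ≤ dist a c)
    (K : Set X) (hKclosed : IsClosed K) (x : X)
    (r : ℝ) (hr : 0 < r)
    (hfin : ν (ball (1 : G) (2 * r) ∩ H) < ⊤) :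
    ∃ S : Finset G,
      (S : Set G) ⊆ {h | h ∈ ball (1 : G) r ∩ H ∧ g • (h • x) ∈ K} ∧
      (S.card : ℝ≥0∞) * ν ((fun h => g⁻¹ * h * g) '' (ball (1 : G) (r / 2) ∩ H))
        ≤ ν {h | h ∈ ball (1 : G) (2 * r) ∩ H ∧ infDist (g • (h • x)) K ≤ r} ∧
      {h | h ∈ ball (1 : G) r ∩ H ∧ g • (h • x) ∈ K}
        ⊆ ⋃ h₀ ∈ S, (fun b => g⁻¹ * b * g * h₀) '' (ball (1 : G) r ∩ H) := by
  classical
  set E : Set G := {h | h ∈ ball (1 : G) r ∩ H ∧ g • (h • x) ∈ K} with hEdef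
  set T : Set G := {h | h ∈ ball (1 : G) (2 * r) ∩ H ∧ infDist (g • (h • x)) K ≤ r}
    with hTdef
  set D : Set G := (fun h => g⁻¹ * h * g) '' (ball (1 : G) (r / 2) ∩ H) with hDdef
  set c : ℝ≥0∞ := ν D with hcdef
  -- distance facts
  have hdist1 : ∀ a : G, a ∈ ball (1 : G) r ∩ H → dist a 1 < r := by
    intro a ha; simpa [mem_ball] using ha.1
  have hinv : ∀ (s : ℝ) (a : G), a ∈ ball (1 : G) s ∩ H → a⁻¹ ∈ ball (1 : G) s ∩ H := by
    intro s a ⟨ha1, ha2⟩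
    refine ⟨?_, H.inv_mem ha2⟩
    have h : dist (a⁻¹ * a) (1 * a) = dist a⁻¹ 1 := hd a⁻¹ 1 a
    simp only [inv_mul_cancel, one_mul] at h
    have key : dist a⁻¹ (1 : G) = dist a 1 := h.symm.trans (dist_comm 1 a)
    simp only [mem_ball] at ha1 ⊢
    rw [key]; exact ha1
  have hmul : ∀ (s t : ℝ) (a b : G), a ∈ ball (1 : G) s ∩ H → b ∈ ball (1 : G) t ∩ H →
      a * b ∈ ball (1 : G) (s + t) ∩ H := by
    intro s t a b ⟨ha1, ha2⟩ ⟨hb1, hb2⟩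
    refine ⟨?_, H.mul_mem ha2 hb2⟩
    simp only [mem_ball] at ha1 hb1 ⊢
    have h1 : dist (a * b) b = dist a 1 := by
      have := hd a 1 b; simpa using this
    calc dist (a * b) 1 ≤ dist (a * b) b + dist b 1 := dist_triangle _ _ _
      _ = dist a 1 + dist b 1 := by rw [h1]
      _ < s + t := add_lt_add ha1 hb1
  -- the Bowen-ball translates
  set Tr : G → Set G := fun h₀ => (fun b => g⁻¹ * b * g * h₀) '' (ball (1 : G) (r / 2) ∩ H)
    with hTrdef
  have hTrMeas : ∀ h₀ : G, MeasurableSet (Tr h₀) := by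
    intro h₀
    exact (Homeomorph.measurableEmbedding (((Homeomorph.mulLeft g⁻¹).trans
      (Homeomorph.mulRight g)).trans (Homeomorph.mulRight h₀))).measurableSet_image.mpr
      (measurableSet_ball.inter hHclosed.measurableSet)
  have hTrν : ∀ h₀ ∈ H, ν (Tr h₀) = c := by
    intro h₀ hh₀
    have : Tr h₀ = (fun a => a * h₀) '' D := by
      rw [hTrdef, hDdef, Set.image_image]
    rw [this, hνinv D h₀ hh₀]
  have hr2 : (0 : ℝ) < r / 2 := by linarith
  have hDsub : D ⊆ ball (1 : G) (r / 2) ∩ H := hcontr (r / 2) hr2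
  -- membership of h₀ in E gives Tr h₀ ⊆ T
  have hTrSub : ∀ h₀ ∈ E, Tr h₀ ⊆ T := by
    intro h₀ hh₀ z hz
    obtain ⟨b, hb, rfl⟩ := hz
    have hdmem : g⁻¹ * b * g ∈ ball (1 : G) (r / 2) ∩ H :=
      hDsub ⟨b, hb, rfl⟩
    have hball : (g⁻¹ * b * g) * h₀ ∈ ball (1 : G) (r / 2 + r) ∩ H :=
      hmul _ _ _ _ hdmem hh₀.1
    constructor
    · refine ⟨ball_subset_ball (by linarith) hball.1, hball.2⟩
    · -- infDist bound
      have key : g • ((g⁻¹ * b * g * h₀) • x) = b • (g • (h₀ • x)) := by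
        rw [← mul_smul, ← mul_smul, ← mul_smul]
        congr 1
        group
      rw [key]
      have hy : g • (h₀ • x) ∈ K := hh₀.2
      have h1 : dist (b • (g • (h₀ • x))) (g • (h₀ • x)) ≤ dist b 1 := by
        have := hLip b 1 (g • (h₀ • x))
        simpa using this
      have h2 : dist b 1 < r / 2 := by
        have := hb.1; simpa [mem_ball] using this
      calc infDist (b • (g • (h₀ • x))) K ≤ dist (b • (g • (h₀ • x))) (g • (h₀ • x)) :=
            infDist_le_dist_of_mem hy
        _ ≤ dist b 1 := h1
        _ ≤ r := by linarith
  -- positivity and finiteness of c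
  have hone : ∀ h₀ : G, h₀ = g⁻¹ * (g * h₀ * g⁻¹) * g := by intro h₀; group
  have hcpos : 0 < c := by
    have hDeq : D = ((fun h => g⁻¹ * h * g) '' ball (1 : G) (r / 2)) ∩ H := by
      apply Set.Subset.antisymm
      · rintro z ⟨b, hb, rfl⟩
        exact ⟨⟨b, hb.1, rfl⟩, (hDsub ⟨b, hb, rfl⟩).2⟩
      · rintro z ⟨⟨b, hb, rfl⟩, hzH⟩
        have : g⁻¹ * b * g ∈ (fun h => g⁻¹ * h * g) '' (H : Set G) := by
          rw [hnorm]; exact hzH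
        obtain ⟨k, hk, hke⟩ := this
        have hbk : b = k := by
          have h' : g⁻¹ * k * g = g⁻¹ * b * g := hke
          exact (mul_left_cancel (mul_right_cancel h')).symm
        exact ⟨b, ⟨hb, by rw [hbk]; exact hk⟩, rfl⟩
    rw [hcdef, hDeq]
    apply hνpos
    · exact (Homeomorph.isOpen_image (((Homeomorph.mulLeft g⁻¹).trans
        (Homeomorph.mulRight g)))).mpr isOpen_ball
    · exact ⟨1, ⟨1, mem_ball_self hr2, by group⟩, H.one_mem⟩
  have hcfin : c < ⊤ := by
    refine lt_of_le_of_lt (measure_mono ?_) hfin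
    intro z hz
    have := hDsub hz
    exact ⟨ball_subset_ball (by linarith) this.1, this.2⟩
  have hTfin : ν T < ⊤ := by
    refine lt_of_le_of_lt (measure_mono ?_) hfin
    intro z hz; exact hz.1
  -- separated families
  set P : Finset G → Prop := fun S => (S : Set G) ⊆ E ∧ (S : Set G).PairwiseDisjoint Tr
    with hPdef
  have hbound : ∀ S : Finset G, P S → (S.card : ℝ≥0∞) * c ≤ ν T := by
    intro S ⟨hSE, hSD⟩
    have h1 : ν (⋃ h₀ ∈ S, Tr h₀) = ∑ h₀ ∈ S, ν (Tr h₀) :=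
      measure_biUnion_finset hSD (fun b _ => hTrMeas b)
    have h2 : ∑ h₀ ∈ S, ν (Tr h₀) = S.card * c := by
      rw [Finset.sum_congr rfl (fun h₀ hh₀ => hTrν h₀ (hSE hh₀).1.2)]
      simp [Finset.sum_const, nsmul_eq_mul]
    have h3 : (⋃ h₀ ∈ S, Tr h₀) ⊆ T := by
      intro z hz
      simp only [Set.mem_iUnion] at hz
      obtain ⟨h₀, hh₀, hz⟩ := hz
      exact hTrSub h₀ (hSE hh₀) hz
    calc (S.card : ℝ≥0∞) * c = ν (⋃ h₀ ∈ S, Tr h₀) := by rw [h1, h2]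
      _ ≤ ν T := measure_mono h3
  have hQfin : ν T / c ≠ ⊤ := by
    intro h
    rw [ENNReal.div_eq_top] at h
    rcases h with ⟨_, h⟩ | ⟨h, _⟩
    · exact hcpos.ne' h
    · exact hTfin.ne h
  obtain ⟨m, hm⟩ := ENNReal.exists_nat_gt hQfin
  have hcard : ∀ S : Finset G, P S → S.card ≤ m := by
    intro S hS
    have h1 : (S.card : ℝ≥0∞) ≤ ν T / c :=
      ENNReal.le_div_iff_mul_le (Or.inl hcpos.ne') (Or.inl hcfin.ne) |>.mpr (hbound S hS)
    have h2 : (S.card : ℝ≥0∞) < m := lt_of_le_of_lt h1 hm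
    exact_mod_cast h2.le
  -- maximal separated family
  set Ncards : Set ℕ := {n | ∃ S : Finset G, P S ∧ S.card = n} with hNdef
  have hNne : Ncards.Nonempty := ⟨0, ∅, ⟨by simp, by simp⟩, rfl⟩
  have hNbdd : BddAbove Ncards := by
    refine ⟨m, ?_⟩
    rintro n ⟨S, hS, rfl⟩
    exact hcard S hS
  obtain ⟨S, hSP, hScard⟩ := Nat.sSup_mem hNne hNbdd
  refine ⟨S, hSP.1, ?_, ?_⟩
  · exact hbound S hSP
  · -- covering
    intro h hh
    have hmax : ∃ h₀ ∈ S, (Tr h ∩ Tr h₀).Nonempty := by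
      by_cases hhS : h ∈ S
      · refine ⟨h, hhS, ⟨g⁻¹ * 1 * g * h, ?_, ?_⟩⟩
        · exact ⟨1, ⟨mem_ball_self hr2, H.one_mem⟩, rfl⟩
        · exact ⟨1, ⟨mem_ball_self hr2, H.one_mem⟩, rfl⟩
      · by_contra hcon
        push_neg at hcon
        have hdisj : ∀ h₀ ∈ (S : Set G), h ≠ h₀ → Disjoint (Tr h) (Tr h₀) := by
          intro h₀ hh₀ _
          rw [Set.disjoint_iff_inter_eq_empty]
          exact hcon h₀ hh₀
        have hP' : P (insert h S) := by
          constructor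
          · intro z hz
            simp only [Finset.coe_insert, Set.mem_insert_iff] at hz
            rcases hz with rfl | hz
            · exact hh
            · exact hSP.1 hz
          · rw [Finset.coe_insert]
            exact hSP.2.insert (fun j hj hne => hdisj j hj hne)
        have : (insert h S).card ∈ Ncards := ⟨insert h S, hP', rfl⟩
        have hle := le_csSup hNbdd this
        rw [Finset.card_insert_of_notMem hhS, hScard] at hle
        omega
    obtain ⟨h₀, hh₀S, z, ⟨b₁, hb₁, hz₁⟩, ⟨b₂, hb₂, hz₂⟩⟩ := hmax
    have hhe : h = g⁻¹ * (b₁⁻¹ * b₂) * g * h₀ := by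
      have : g⁻¹ * b₁ * g * h = g⁻¹ * b₂ * g * h₀ := hz₁.trans hz₂.symm
      have h2 : h = (g⁻¹ * b₁ * g)⁻¹ * (g⁻¹ * b₂ * g * h₀) := by
        rw [← this]; group
      rw [h2]; group
    have hbmem : b₁⁻¹ * b₂ ∈ ball (1 : G) r ∩ H := by
      have := hmul (r / 2) (r / 2) b₁⁻¹ b₂ (hinv _ _ hb₁) hb₂
      have heq : r / 2 + r / 2 = r := by ring
      rwa [heq] at this
    refine Set.mem_biUnion hh₀S ⟨b₁⁻¹ * b₂, hbmem, hhe.symm⟩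
end

section
/- Let H be a topological group equipped with a right-invariant metric d inducing its topology, and let ν be a right Haar measure on H (a Borel measure positive on nonempty open sets and invariant under right translations). Let A ⊆ H and ρ > 0, and assume ν(∂_{ρ/2}A) < ∞, where ∂_{ρ/2}A := {h ∈ H : dist(h, A) ≤ ρ/2}. Then there exists a finite set S ⊆ A such that (card S) · ν(B(ρ/2)) ≤ ν(∂_{ρ/2}A) and A ⊆ ⋃_{h ∈ S} B(ρ)·h, where B(s) denotes the open d-ball of radius s about the identity of H. -/
open MeasureTheory Metric Set
open scoped ENNReal

/-- In a topological group H with a right-invariant metric inducing its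
topology and a right Haar measure ν, any set A with ν(∂_{ρ/2}A) < ∞ can be covered by
at most ν(∂_{ρ/2}A)/ν(B(ρ/2)) balls of radius ρ centered at points of A. -/
theorem covering_by_balls_of_haar
    {H : Type*} [Group H] [MetricSpace H] [IsTopologicalGroup H]
    [MeasurableSpace H] [BorelSpace H]
    (hd : ∀ a c g : H, dist (a * g) (c * g) = dist a c)
    (ν : Measure H)
    (hνpos : ∀ U : Set H, IsOpen U → U.Nonempty → 0 < ν U)
    (hνinv : ∀ (S : Set H) (h : H), ν ((fun a => a * h) '' S) = ν S)
    (A : Set H) (ρ : ℝ) (hρ : 0 < ρ)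
    (hfin : ν {h | infDist h A ≤ ρ / 2} < ⊤) :
    ∃ S : Finset H, (S : Set H) ⊆ A ∧
      (S.card : ℝ≥0∞) * ν (ball (1 : H) (ρ / 2)) ≤ ν {h | infDist h A ≤ ρ / 2} ∧
      A ⊆ ⋃ h ∈ S, (fun b => b * h) '' ball (1 : H) ρ := by
  classical
  set c := ν (ball (1 : H) (ρ / 2)) with hc
  set M := ν {h | infDist h A ≤ ρ / 2} with hMdef
  have hball : ∀ (h : H) (r : ℝ), (fun b => b * h) '' ball (1 : H) r = ball h r := by
    intro h r
    ext b
    constructor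
    · rintro ⟨x, hx, rfl⟩
      have hx1 : dist (x * h) h = dist x 1 := by
        have := hd x 1 h; simpa using this
      simpa [mem_ball, hx1] using hx
    · intro hb
      refine ⟨b * h⁻¹, ?_, by simp⟩
      have hx1 : dist b h = dist (b * h⁻¹) 1 := by
        have := hd (b * h⁻¹) 1 h; simpa [mul_assoc] using this
      simpa [mem_ball, ← hx1] using hb
  have hcball : ∀ h : H, ν (ball h (ρ / 2)) = c := by
    intro h
    rw [← hball h (ρ / 2), hνinv]
  have hcpos : 0 < c := hνpos _ isOpen_ball ⟨1, by simp [half_pos hρ]⟩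
  -- key bound for separated finite subsets
  have key : ∀ S : Finset H, (S : Set H) ⊆ A →
      (∀ x ∈ S, ∀ y ∈ S, x ≠ y → ρ ≤ dist x y) →
      (S.card : ℝ≥0∞) * c ≤ M := by
    intro S hSA hsep
    have hdisj : (S : Set H).PairwiseDisjoint (fun h => ball h (ρ / 2)) := by
      intro x hx y hy hxy
      simp only [Function.onFun]
      rw [Set.disjoint_left]
      intro z hzx hzy
      have h1 : dist x y ≤ dist z x + dist z y := dist_triangle_left x y z
      have : dist x y < ρ := by
        have := add_lt_add (mem_ball.mp hzx) (mem_ball.mp hzy)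
        linarith
      exact absurd (hsep x hx y hy hxy) (not_le.mpr this)
    have hmeas : ν (⋃ h ∈ S, ball h (ρ / 2)) = (S.card : ℝ≥0∞) * c := by
      rw [measure_biUnion_finset hdisj (fun h _ => measurableSet_ball)]
      simp [hcball, Finset.sum_const, mul_comm]
    have hsub : (⋃ h ∈ S, ball h (ρ / 2)) ⊆ {h | infDist h A ≤ ρ / 2} := by
      intro z hz
      simp only [Set.mem_iUnion] at hz
      obtain ⟨h, hhS, hzh⟩ := hz
      have : infDist z A ≤ dist z h := infDist_le_dist_of_mem (hSA hhS)
      exact le_trans this (le_of_lt (mem_ball.mp hzh))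
    calc (S.card : ℝ≥0∞) * c = ν (⋃ h ∈ S, ball h (ρ / 2)) := hmeas.symm
      _ ≤ M := measure_mono hsub
  -- the set of cardinalities of separated subsets
  set T : Set ℕ := {n | ∃ S : Finset H, (S : Set H) ⊆ A ∧
      (∀ x ∈ S, ∀ y ∈ S, x ≠ y → ρ ≤ dist x y) ∧ S.card = n} with hT
  have hT0 : (0 : ℕ) ∈ T := ⟨∅, by simp⟩
  have h2 : M / c < ⊤ := ENNReal.div_lt_top hfin.ne hcpos.ne'
  obtain ⟨N, hN⟩ := ENNReal.exists_nat_gt h2.ne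
  have hbdd : BddAbove T := by
    refine ⟨N, ?_⟩
    rintro n ⟨S, hSA, hsep, rfl⟩
    have h1 : (S.card : ℝ≥0∞) ≤ M / c :=
      (ENNReal.le_div_iff_mul_le (Or.inl hcpos.ne') (Or.inr hfin.ne)).mpr
        (key S hSA hsep)
    have : (S.card : ℝ≥0∞) < N := lt_of_le_of_lt h1 hN
    exact_mod_cast this.le
  obtain ⟨S, hSA, hsep, hScard⟩ := Nat.sSup_mem ⟨0, hT0⟩ hbdd
  refine ⟨S, hSA, key S hSA hsep, ?_⟩
  intro a ha
  by_contra hcov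
  simp only [Set.mem_iUnion, not_exists] at hcov
  have haway : ∀ h ∈ S, ρ ≤ dist a h := by
    intro h hh
    by_contra hlt
    exact hcov h hh (by rw [hball]; exact mem_ball.mpr (not_le.mp hlt))
  have haS : a ∉ S := by
    intro haS
    have := haway a haS
    simp at this
    linarith
  have hins : S.card + 1 ∈ T := by
    refine ⟨insert a S, ?_, ?_, by rw [Finset.card_insert_of_notMem haS]⟩
    · intro x hx
      simp only [Finset.coe_insert, Set.mem_insert_iff] at hx
      rcases hx with rfl | hx
      · exact ha
      · exact hSA hx
    · intro x hx y hy hxy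
      simp only [Finset.mem_insert] at hx hy
      rcases hx with rfl | hx
      · rcases hy with rfl | hy
        · exact absurd rfl hxy
        · exact haway y hy
      · rcases hy with rfl | hy
        · rw [dist_comm]; exact haway x hx
        · exact hsep x hx y hy hxy
  have : S.card + 1 ≤ sSup T := le_csSup hbdd hins
  omega
end
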